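/- arXiv:1501.04547 — 3 statements merged into one kernel-verified Lean document; each statement's English description precedes it below -/
import Mathlib

section
/- Let p, a, b be real numbers with p > 4, a > 0 and b ≥ 0. Then the equation a + b·t² = t^(p−2) has exactly one solution t in (0, ∞). (Equivalently, the fibering map H(t) = (1/2)·a·t² + (1/4)·b·t⁴ − (1/p)·t^p has exactly one critical point on (0, ∞), since H'(t) = t·(a + b·t² − t^(p−2)).) -/
/-- For real `p > 4`, `a > 0`, `b ≥ 0`, the equation `a + b·t² = t^(p-2)` has exactly one
solution `t` in `(0, ∞)`. -/
theorem unique_positive_root (p a b : ℝ) (hp : 4 < p) (ha : 0 < a) (hb : 0 ≤ b) :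
    ∃! t : ℝ, 0 < t ∧ a + b * t ^ 2 = t ^ (p - 2) := by
  have hq : 0 < p - 4 := by linarith
  set g : ℝ → ℝ := fun t => t ^ (p - 4) - a / t ^ 2 - b with hgdef
  -- equivalence of the equation with `g t = 0`
  have hiff : ∀ t : ℝ, 0 < t → (a + b * t ^ 2 = t ^ (p - 2) ↔ g t = 0) := by
    intro t ht
    have ht2 : (0:ℝ) < t ^ 2 := pow_pos ht 2
    have hsplit : t ^ (p - 2) = t ^ (p - 4) * t ^ 2 := by
      have hps : p - 2 = (p - 4) + (2:ℕ) := by push_cast; ring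
      rw [hps, Real.rpow_add ht, Real.rpow_natCast]
    rw [hsplit, hgdef]
    simp only
    constructor
    · intro h
      have : a / t ^ 2 = t ^ (p - 4) - b := by
        field_simp
        nlinarith [h]
      rw [this]; ring
    · intro h
      have : a / t ^ 2 = t ^ (p - 4) - b := by linarith
      have := (div_eq_iff ht2.ne').mp this
      nlinarith [this]
  -- strict monotonicity of g on (0, ∞)
  have hmono : StrictMonoOn g (Set.Ioi 0) := by
    intro x hx y hy hxy
    simp only [Set.mem_Ioi] at hx hy
    have h1 : x ^ (p - 4) < y ^ (p - 4) := Real.rpow_lt_rpow hx.le hxy hq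
    have h2 : a / y ^ 2 < a / x ^ 2 :=
      div_lt_div_of_pos_left ha (pow_pos hx 2) (pow_lt_pow_left₀ hxy hx.le (by norm_num))
    simp only [hgdef]
    linarith
  -- a point where g is negative
  obtain ⟨t0, ht0pos, ht0lt1, ht0neg⟩ : ∃ t0 : ℝ, 0 < t0 ∧ t0 < 1 ∧ g t0 < 0 := by
    set c := Real.sqrt (a / (1 + b)) with hc
    have hcpos : 0 < c := Real.sqrt_pos.mpr (div_pos ha (by linarith))
    have hmin1 : min 1 c ≤ 1 := min_le_left _ _
    have hminc : min 1 c ≤ c := min_le_right _ _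
    have hminpos : 0 < min 1 c := lt_min one_pos hcpos
    refine ⟨min 1 c / 2, by positivity, by linarith, ?_⟩
    set t0 := min 1 c / 2 with ht0
    have ht0pos : 0 < t0 := by positivity
    have ht0lt1 : t0 < 1 := by rw [ht0]; linarith
    have h1 : t0 ^ (p - 4) < 1 := Real.rpow_lt_one ht0pos.le ht0lt1 hq
    have h2 : (1 : ℝ) + b < a / t0 ^ 2 := by
      have htc : t0 < c := by rw [ht0]; linarith
      have ht2 : t0 ^ 2 < a / (1 + b) := by
        have := pow_lt_pow_left₀ htc ht0pos.le (n := 2) (by norm_num)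
        rwa [hc, Real.sq_sqrt (by positivity)] at this
      rw [lt_div_iff₀ (by positivity)]
      rw [lt_div_iff₀ (by linarith)] at ht2
      linarith
    simp only [hgdef]
    linarith
  -- a point where g is positive
  obtain ⟨t1, ht1gt1, ht1pos'⟩ : ∃ t1 : ℝ, 1 < t1 ∧ 0 < g t1 := by
    have habp : (0:ℝ) ≤ a + b + 1 := by linarith
    refine ⟨(a + b + 1) ^ (p - 4)⁻¹, ?_, ?_⟩
    · exact (Real.one_lt_rpow_iff_of_pos (by linarith)).mpr (Or.inl ⟨by linarith, by positivity⟩)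
    · set t1 := (a + b + 1) ^ (p - 4)⁻¹ with ht1
      have ht1gt1 : 1 < t1 :=
        (Real.one_lt_rpow_iff_of_pos (by linarith)).mpr (Or.inl ⟨by linarith, by positivity⟩)
      have hpow : t1 ^ (p - 4) = a + b + 1 := by
        rw [ht1, ← Real.rpow_mul habp, inv_mul_cancel₀ hq.ne', Real.rpow_one]
      have h2 : a / t1 ^ 2 < a := by
        have h12 : 1 < t1 ^ 2 := by nlinarith
        rw [div_lt_iff₀ (by positivity)]
        nlinarith
      simp only [hgdef]
      rw [hpow]
      linarith
  have ht01 : t0 < t1 := by linarith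
  -- continuity of g on [t0, t1]
  have hcont : ContinuousOn g (Set.Icc t0 t1) := by
    have h1 : ContinuousOn (fun t : ℝ => t ^ (p - 4)) (Set.Icc t0 t1) :=
      continuousOn_id.rpow_const (fun x _ => Or.inr hq.le)
    have h2 : ContinuousOn (fun t : ℝ => a / t ^ 2) (Set.Icc t0 t1) :=
      continuousOn_const.div (continuousOn_pow 2)
        (fun x hx => pow_ne_zero 2 (by nlinarith [hx.1]))
    exact (h1.sub h2).sub continuousOn_const
  -- IVT
  have hzero : (0:ℝ) ∈ Set.Icc (g t0) (g t1) := ⟨ht0neg.le, ht1pos'.le⟩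
  obtain ⟨t, htmem, htzero⟩ := intermediate_value_Icc ht01.le hcont hzero
  have htpos : 0 < t := lt_of_lt_of_le ht0pos htmem.1
  refine ⟨t, ⟨htpos, (hiff t htpos).mpr htzero⟩, ?_⟩
  rintro s ⟨hspos, hseq⟩
  have hs0 : g s = 0 := (hiff s hspos).mp hseq
  exact hmono.injOn (Set.mem_Ioi.mpr hspos) (Set.mem_Ioi.mpr htpos) (by rw [hs0, htzero])
end

section
/- Let p, a, b be real numbers with p > 4, a > 0, b ≥ 0, and let t₀ be the unique positive solution of a + b·t² = t^(p−2). Then the function H(t) = (1/2)·a·t² + (1/4)·b·t⁴ − (1/p)·t^p is strictly increasing on (0, t₀) and strictly decreasing on (t₀, ∞); in particular t₀ is the strict global maximum point of H on (0, ∞). -/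
/-!
Since `H'(t) = t · (a + b t² - t^(p-2))`, everything reduces to the sign of
`a + b t² - t^(p-2)` on `(0, ∞)`. Dividing by `t^(p-2)`, this is the sign of `ψ(t) - 1` with
`ψ(t) = a t^(2-p) + b t^(4-p)`, which is strictly decreasing because both exponents are
negative and `a > 0`; as `ψ(t₀) = 1`, the sign is positive before `t₀` and negative after it.
-/

open Set

section Sign

variable {a b q t : ℝ}

lemma strictAntiOn_mul_rpow_neg_add_mul_rpow (ha : 0 < a) (hb : 0 ≤ b) (hq : 2 ≤ q) :
    StrictAntiOn (fun t : ℝ => a * t ^ (-q) + b * t ^ (2 - q)) (Ioi 0) := by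
  intro s hs t _ hst
  have hfirst : a * t ^ (-q) < a * s ^ (-q) :=
    mul_lt_mul_of_pos_left (Real.rpow_lt_rpow_of_neg hs hst (by linarith)) ha
  have hsecond : b * t ^ (2 - q) ≤ b * s ^ (2 - q) :=
    mul_le_mul_of_nonneg_left (Real.rpow_le_rpow_of_nonpos hs hst.le (by linarith)) hb
  exact add_lt_add_of_lt_of_le hfirst hsecond

lemma add_mul_sq_eq_rpow_mul (ht : 0 < t) :
    a + b * t ^ 2 = t ^ q * (a * t ^ (-q) + b * t ^ (2 - q)) := by
  have hneg : t ^ q * t ^ (-q) = 1 := by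
    rw [Real.rpow_neg ht.le, mul_inv_cancel₀ (Real.rpow_pos_of_pos ht q).ne']
  have hsub : t ^ q * t ^ (2 - q) = t ^ 2 := by
    rw [← Real.rpow_add ht, add_sub_cancel, Real.rpow_two]
  linear_combination (-a) * hneg - b * hsub

variable {t₀ : ℝ}

lemma mul_rpow_neg_add_mul_rpow_eq_one (ht₀ : 0 < t₀) (heq : a + b * t₀ ^ 2 = t₀ ^ q) :
    a * t₀ ^ (-q) + b * t₀ ^ (2 - q) = 1 :=
  (mul_eq_left₀ (Real.rpow_pos_of_pos ht₀ q).ne').mp ((add_mul_sq_eq_rpow_mul ht₀).symm.trans heq)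

lemma rpow_lt_add_mul_sq_of_lt (ha : 0 < a) (hb : 0 ≤ b) (hq : 2 ≤ q) (ht₀ : 0 < t₀)
    (heq : a + b * t₀ ^ 2 = t₀ ^ q) (ht : 0 < t) (htt₀ : t < t₀) :
    t ^ q < a + b * t ^ 2 := by
  have hψ₀ := mul_rpow_neg_add_mul_rpow_eq_one ht₀ heq
  have hψ : 1 < a * t ^ (-q) + b * t ^ (2 - q) :=
    hψ₀ ▸ strictAntiOn_mul_rpow_neg_add_mul_rpow ha hb hq ht ht₀ htt₀
  rw [add_mul_sq_eq_rpow_mul ht]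
  exact lt_mul_of_one_lt_right (Real.rpow_pos_of_pos ht q) hψ

lemma add_mul_sq_lt_rpow_of_lt (ha : 0 < a) (hb : 0 ≤ b) (hq : 2 ≤ q) (ht₀ : 0 < t₀)
    (heq : a + b * t₀ ^ 2 = t₀ ^ q) (htt₀ : t₀ < t) :
    a + b * t ^ 2 < t ^ q := by
  have ht : 0 < t := ht₀.trans htt₀
  have hψ₀ := mul_rpow_neg_add_mul_rpow_eq_one ht₀ heq
  have hψ : a * t ^ (-q) + b * t ^ (2 - q) < 1 :=
    hψ₀ ▸ strictAntiOn_mul_rpow_neg_add_mul_rpow ha hb hq ht₀ ht htt₀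
  rw [add_mul_sq_eq_rpow_mul ht]
  exact mul_lt_of_lt_one_right (Real.rpow_pos_of_pos ht q) hψ

end Sign

lemma hasDerivAt_fiberingMap {a b p t : ℝ} (hp : p ≠ 0) (ht : 0 < t) :
    HasDerivAt (fun t : ℝ => 1 / 2 * a * t ^ 2 + 1 / 4 * b * t ^ 4 - 1 / p * t ^ p)
      (t * (a + b * t ^ 2 - t ^ (p - 2))) t := by
  have hquad := (hasDerivAt_pow 2 t).const_mul (1 / 2 * a)
  have hquart := (hasDerivAt_pow 4 t).const_mul (1 / 4 * b)
  have hpow := (Real.hasDerivAt_rpow_const (p := p) (Or.inl ht.ne')).const_mul (1 / p)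
  refine ((hquad.add hquart).sub hpow).congr_deriv ?_
  have hsplit : t ^ (p - 1) = t * t ^ (p - 2) := by
    rw [show p - 1 = p - 2 + 1 by ring, Real.rpow_add_one ht.ne', mul_comm]
  rw [hsplit]
  field_simp
  ring

lemma strictMonoOn_Ioc_of_hasDerivAt_pos {f f' : ℝ → ℝ} {t₀ : ℝ}
    (hf : ∀ t, 0 < t → HasDerivAt f (f' t) t) (hf' : ∀ t, 0 < t → t < t₀ → 0 < f' t) :
    StrictMonoOn f (Ioc 0 t₀) := by
  refine strictMonoOn_of_deriv_pos (convex_Ioc 0 t₀)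
    (fun t ht => (hf t ht.1).continuousAt.continuousWithinAt) fun t ht => ?_
  rw [interior_Ioc] at ht
  exact (hf t ht.1).deriv ▸ hf' t ht.1 ht.2

lemma strictAntiOn_Ici_of_hasDerivAt_neg {f f' : ℝ → ℝ} {t₀ : ℝ} (ht₀ : 0 < t₀)
    (hf : ∀ t, 0 < t → HasDerivAt f (f' t) t) (hf' : ∀ t, t₀ < t → f' t < 0) :
    StrictAntiOn f (Ici t₀) := by
  refine strictAntiOn_of_deriv_neg (convex_Ici t₀)
    (fun t ht => (hf t (ht₀.trans_le ht)).continuousAt.continuousWithinAt) fun t ht => ?_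
  rw [interior_Ici] at ht
  exact (hf t (ht₀.trans ht)).deriv ▸ hf' t ht

/-- For real `p > 4`, `a > 0`, `b ≥ 0` and `t₀` the (unique) positive solution of
`a + b·t² = t^(p-2)`, the fibering map `H(t) = (1/2)at² + (1/4)bt⁴ - (1/p)t^p`
is strictly increasing on `(0, t₀)`, strictly decreasing on `(t₀, ∞)`, and `t₀` is
the strict global maximum point of `H` on `(0, ∞)`. -/
theorem fibering_map_monotonicity (p a b t₀ : ℝ) (hp : 4 < p) (ha : 0 < a) (hb : 0 ≤ b)
    (ht₀ : 0 < t₀) (heq : a + b * t₀ ^ 2 = t₀ ^ (p - 2))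
    (H : ℝ → ℝ)
    (hH : ∀ t : ℝ, H t = 1 / 2 * a * t ^ 2 + 1 / 4 * b * t ^ 4 - 1 / p * t ^ p) :
    StrictMonoOn H (Set.Ioo 0 t₀) ∧ StrictAntiOn H (Set.Ioi t₀) ∧
      ∀ t : ℝ, 0 < t → t ≠ t₀ → H t < H t₀ := by
  have hq : 2 ≤ p - 2 := by linarith
  have hderiv : ∀ t, 0 < t → HasDerivAt H (t * (a + b * t ^ 2 - t ^ (p - 2))) t := fun t ht =>
    funext hH ▸ hasDerivAt_fiberingMap (by linarith) ht
  have hmono : StrictMonoOn H (Ioc 0 t₀) :=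
    strictMonoOn_Ioc_of_hasDerivAt_pos hderiv fun t ht htt₀ =>
      mul_pos ht (sub_pos.mpr (rpow_lt_add_mul_sq_of_lt ha hb hq ht₀ heq ht htt₀))
  have hanti : StrictAntiOn H (Ici t₀) :=
    strictAntiOn_Ici_of_hasDerivAt_neg ht₀ hderiv fun t htt₀ =>
      mul_neg_of_pos_of_neg (ht₀.trans htt₀)
        (sub_neg.mpr (add_mul_sq_lt_rpow_of_lt ha hb hq ht₀ heq htt₀))
  refine ⟨hmono.mono Ioo_subset_Ioc_self, hanti.mono Ioi_subset_Ici_self, fun t ht hne => ?_⟩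
  rcases hne.lt_or_gt with htt₀ | htt₀
  · exact hmono ⟨ht, htt₀.le⟩ ⟨ht₀, le_rfl⟩ htt₀
  · exact hanti self_mem_Ici htt₀.le htt₀
end

section
/- Let p, a, b be real numbers with p > 4, a > 0, b ≥ 0, and let t₀ be the unique positive solution of a + b·t² = t^(p−2). Then (1/4)·a·t₀² + (1/4 − 1/p)·t₀^p ≥ (1/4 − 1/p)·a^{p/(p−2)}. -/
/-- For real `p > 4`, `a > 0`, `b ≥ 0` and `t₀` the (unique) positive solution of
`a + b·t² = t^(p-2)`, one has
`(1/4)·a·t₀² + (1/4 - 1/p)·t₀^p ≥ (1/4 - 1/p)·a^(p/(p-2))`. -/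
theorem nehari_value_lower_bound (p a b t₀ : ℝ) (hp : 4 < p) (ha : 0 < a) (hb : 0 ≤ b)
    (ht₀ : 0 < t₀) (heq : a + b * t₀ ^ 2 = t₀ ^ (p - 2)) :
    (1 / 4 - 1 / p) * a ^ (p / (p - 2)) ≤ 1 / 4 * a * t₀ ^ 2 + (1 / 4 - 1 / p) * t₀ ^ p := by
  have hp2 : (0:ℝ) < p - 2 := by linarith
  have hcoef : (0:ℝ) < 1 / 4 - 1 / p := by
    have : 1 / p < 1 / 4 := by
      apply one_div_lt_one_div_of_lt <;> linarith
    linarith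
  have hale : a ≤ t₀ ^ (p - 2) := by nlinarith [mul_nonneg hb (sq_nonneg t₀)]
  have hpow : a ^ (p / (p - 2)) ≤ t₀ ^ p := by
    have h1 : a ^ (p / (p - 2)) ≤ (t₀ ^ (p - 2)) ^ (p / (p - 2)) :=
      Real.rpow_le_rpow ha.le hale (by positivity)
    have h2 : (t₀ ^ (p - 2)) ^ (p / (p - 2)) = t₀ ^ p := by
      rw [← Real.rpow_mul ht₀.le]
      congr 1
      field_simp
    calc a ^ (p / (p - 2)) ≤ (t₀ ^ (p - 2)) ^ (p / (p - 2)) := h1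
      _ = t₀ ^ p := h2
  have h3 : (1 / 4 - 1 / p) * a ^ (p / (p - 2)) ≤ (1 / 4 - 1 / p) * t₀ ^ p :=
    mul_le_mul_of_nonneg_left hpow hcoef.le
  nlinarith [mul_pos ha (pow_pos ht₀ 2)]
end
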